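/- arXiv:0710.2109 — 6 statements merged into one kernel-verified Lean document; each statement's English description precedes it below -/
import Mathlib

section
/- Let n ≥ 2 and let S be an intersecting family of permutations in the symmetric group S(n), i.e. for any π, σ ∈ S there exists i ∈ {1,…,n} with π(i) = σ(i). Then |S| ≤ (n−1)!. -/
/-!
Let `c = finRotate n`, an `n`-cycle. No nontrivial power of `c` has a fixed point, so two
permutations in the same left coset of `⟨c⟩` agree nowhere. An intersecting family therefore
meets each of the `n! / n = (n - 1)!` cosets at most once.
-/

open Equiv Equiv.Perm

theorem Finset.card_le_index_of_inv_mul_mem {G : Type*} [Group G] {H : Subgroup G}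
    [H.FiniteIndex] {S : Finset G} (hS : ∀ a ∈ S, ∀ b ∈ S, a⁻¹ * b ∈ H → a = b) :
    S.card ≤ H.index := by
  classical
  have := Fintype.ofFinite (G ⧸ H)
  rw [Subgroup.index, Nat.card_eq_fintype_card, ← Finset.card_univ]
  refine Finset.card_le_card_of_injOn (QuotientGroup.mk : G → G ⧸ H)
    (fun _ _ ↦ Finset.mem_coe.2 (Finset.mem_univ _)) fun a ha b hb hab ↦ hS a ha b hb ?_
  exact QuotientGroup.eq.1 hab

def Subgroup.IsSemiregular {α : Type*} (H : Subgroup (Perm α)) : Prop :=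
  ∀ h ∈ H, ∀ x, h x = x → h = 1

theorem Subgroup.IsSemiregular.eq_of_inv_mul_mem {α : Type*} {H : Subgroup (Perm α)}
    (hH : H.IsSemiregular) {π σ : Perm α} (hπσ : π⁻¹ * σ ∈ H) {x : α} (hx : π x = σ x) :
    π = σ :=
  inv_mul_eq_one.1 (hH _ hπσ x (inv_eq_iff_eq.2 hx.symm))

theorem Subgroup.IsSemiregular.card_mul_card_le_factorial {α : Type*} [Fintype α]
    {H : Subgroup (Perm α)} (hH : H.IsSemiregular) {S : Finset (Perm α)}
    (hS : ∀ π ∈ S, ∀ σ ∈ S, ∃ x, π x = σ x) :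
    S.card * Nat.card H ≤ (Fintype.card α).factorial := by
  calc S.card * Nat.card H ≤ H.index * Nat.card H := by
        refine Nat.mul_le_mul_right _ (Finset.card_le_index_of_inv_mul_mem fun π hπ σ hσ h ↦ ?_)
        obtain ⟨x, hx⟩ := hS π hπ σ hσ
        exact hH.eq_of_inv_mul_mem h hx
    _ = (Fintype.card α).factorial := by
        rw [Subgroup.index_mul_card, Nat.card_perm, Nat.card_eq_fintype_card]

theorem Equiv.Perm.IsCycle.isSemiregular_zpowers {α : Type*} [Finite α] {c : Perm α}
    (hc : c.IsCycle) (hfix : ∀ x, c x ≠ x) : (Subgroup.zpowers c).IsSemiregular := by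
  rintro h hh x hx
  obtain ⟨k, rfl⟩ := mem_powers_iff_mem_zpowers.2 hh
  exact (hc.pow_eq_one_iff' (hfix x)).2 hx

theorem Equiv.Perm.IsCycle.card_zpowers {α : Type*} [Fintype α] [DecidableEq α] {c : Perm α}
    (hc : c.IsCycle) (hsupp : c.support = Finset.univ) :
    Nat.card (Subgroup.zpowers c) = Fintype.card α := by
  rw [Nat.card_zpowers, hc.orderOf, hsupp, Finset.card_univ]

/-- **Deza–Frankl bound.** If `S` is an intersecting family of permutations of an
`n`-set (`n ≥ 2`), i.e. any two members of `S` agree in some point, then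
`|S| ≤ (n-1)!`. -/
theorem intersecting_family_card_le (n : ℕ) (hn : 2 ≤ n)
    (S : Finset (Equiv.Perm (Fin n)))
    (hS : ∀ π ∈ S, ∀ σ ∈ S, ∃ i : Fin n, π i = σ i) :
    S.card ≤ (n - 1).factorial := by
  have hc := isCycle_finRotate_of_le hn
  have hsupp := support_finRotate_of_le hn
  have hfix : ∀ i, finRotate n i ≠ i := fun i ↦ mem_support.1 (hsupp ▸ Finset.mem_univ i)
  have hbound := (hc.isSemiregular_zpowers hfix).card_mul_card_le_factorial hS
  rw [hc.card_zpowers hsupp, Fintype.card_fin, ← Nat.mul_factorial_pred (by omega),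
    mul_comm n] at hbound
  exact Nat.le_of_mul_le_mul_right hbound (by omega)
end

section
/- For every n ≥ 1, the independence number of the permutation graph P(n) equals (n−1)!: every independent set in P(n) has at most (n−1)! vertices, and the sets S_{i,j} = {π ∈ S(n) : π(i) = j} are independent sets of size (n−1)!. -/
/-- The permutation graph `P(n)`: vertices are the permutations of `{1,…,n}`, and
distinct `π, σ` are adjacent iff `π i ≠ σ i` for every `i`. -/
def permutationGraph (n : ℕ) : SimpleGraph (Equiv.Perm (Fin n)) where
  Adj π σ := π ≠ σ ∧ ∀ i : Fin n, π i ≠ σ i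
  symm := ⟨fun π σ h => ⟨h.1.symm, fun i => (h.2 i).symm⟩⟩
  loopless := ⟨fun π h => h.1 rfl⟩

/-!
Left multiplication by a transposition permutes the fibres of `π ↦ π i`, so all `n` of them
have `n!/n = (n-1)!` elements. For the upper bound identify `{1,…,n}` with `ℤ/n` and
post-compose each `π` with the translation by `-π 0`, landing in the fibre `π 0 = 0`. Two
permutations with the same image differ by a translation; if they also agree somewhere, that
translation is trivial. So the map is injective on an independent set.
-/

open Finset

namespace Equiv.Perm

variable {α : Type*} [Fintype α] [DecidableEq α]

theorem card_filter_apply_eq_congr (i j j' : α) :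
    #{π : Perm α | π i = j} = #{π : Perm α | π i = j'} :=
  card_equiv (Equiv.mulLeft (swap j j')) fun π => by
    simp only [mem_filter, mem_univ, true_and, coe_mulLeft, mul_apply]
    constructor
    · rintro rfl
      exact swap_apply_left _ _
    · intro h
      simpa using congrArg (swap j j') h

theorem card_filter_apply_eq (i j : α) :
    #{π : Perm α | π i = j} = (Fintype.card α - 1).factorial := by
  have hpos : 0 < Fintype.card α := Fintype.card_pos_iff.mpr ⟨i⟩
  have hfibres : Fintype.card α * #{π : Perm α | π i = j} = (Fintype.card α).factorial := by
    calc Fintype.card α * #{π : Perm α | π i = j}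
        = ∑ k : α, #{π : Perm α | π i = k} := by
          rw [sum_congr rfl fun k _ => card_filter_apply_eq_congr i k j, sum_const, card_univ,
            smul_eq_mul]
      _ = Fintype.card (Perm α) :=
          (card_eq_sum_card_fiberwise fun π _ => mem_univ (π i)).symm
      _ = (Fintype.card α).factorial := Fintype.card_perm
  rw [← Nat.mul_factorial_pred hpos.ne'] at hfibres
  exact Nat.eq_of_mul_eq_mul_left hpos hfibres

theorem card_le_factorial_of_pairwise_exists_apply_eq [AddGroup α] {S : Finset (Perm α)}
    (hS : (S : Set (Perm α)).Pairwise fun π σ => ∃ x, π x = σ x) :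
    #S ≤ (Fintype.card α - 1).factorial := by
  let normalize : Perm α → Perm α := fun π => π.trans (Equiv.addLeft (-π 0))
  have hmaps : ∀ π ∈ S, normalize π ∈ ({π : Perm α | π 0 = 0} : Finset _) := by
    simp [normalize]
  have hinj : Set.InjOn normalize S := by
    intro π hπ σ hσ hnorm
    have hshift : ∀ x, -π 0 + π x = -σ 0 + σ x := fun x => by
      simpa [normalize] using congrArg (· x) hnorm
    by_contra hne
    obtain ⟨x, hx⟩ := hS hπ hσ hne
    have h0 : π 0 = σ 0 := neg_injective (add_right_cancel (hx ▸ hshift x))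
    exact hne (ext fun y => add_left_cancel (h0 ▸ hshift y))
  calc #S ≤ #{π : Perm α | π 0 = 0} := card_le_card_of_injOn normalize hmaps hinj
    _ = (Fintype.card α - 1).factorial := card_filter_apply_eq 0 0

end Equiv.Perm

theorem permutationGraph_not_adj_iff {n : ℕ} {π σ : Equiv.Perm (Fin n)} :
    ¬ (permutationGraph n).Adj π σ ↔ (π ≠ σ → ∃ i, π i = σ i) := by
  simp [permutationGraph]

/-- The independence number of the permutation graph `P(n)` is `(n-1)!` (`n ≥ 1`):
every independent set has at most `(n-1)!` vertices, and each of the sets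
`S_{i,j} = {π : π i = j}` is an independent set of size `(n-1)!`. -/
theorem independenceNumber_permutationGraph (n : ℕ) (hn : 1 ≤ n) :
    (∀ S : Finset (Equiv.Perm (Fin n)),
      (∀ π ∈ S, ∀ σ ∈ S, ¬ (permutationGraph n).Adj π σ) →
        S.card ≤ (n - 1).factorial) ∧
    (∀ i j : Fin n,
      (∀ π ∈ Finset.univ.filter (fun π : Equiv.Perm (Fin n) => π i = j),
        ∀ σ ∈ Finset.univ.filter (fun π : Equiv.Perm (Fin n) => π i = j),
          ¬ (permutationGraph n).Adj π σ) ∧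
      (Finset.univ.filter (fun π : Equiv.Perm (Fin n) => π i = j)).card
        = (n - 1).factorial) := by
  refine ⟨fun S hS => ?_, fun i j => ⟨?_, ?_⟩⟩
  · have : NeZero n := ⟨by omega⟩
    simpa using Equiv.Perm.card_le_factorial_of_pairwise_exists_apply_eq
      fun π hπ σ hσ => permutationGraph_not_adj_iff.mp (hS π hπ σ hσ)
  · intro π hπ σ hσ hadj
    simp only [mem_filter, mem_univ, true_and] at hπ hσ
    exact hadj.2 i (hπ.trans hσ.symm)
  · simpa using Equiv.Perm.card_filter_apply_eq i j
end

section
/- For every n ≥ 2, both d(n) and −d(n)/(n−1) = −(d(n−1) + d(n−2)) are eigenvalues of the (real) adjacency matrix of the permutation graph P(n). -/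
instance (n : ℕ) : DecidableRel (permutationGraph n).Adj :=
  fun π σ => inferInstanceAs (Decidable (π ≠ σ ∧ ∀ i : Fin n, π i ≠ σ i))

/-- The real adjacency matrix of the permutation graph `P(n)`. -/
def permutationGraphAdjMatrix (n : ℕ) :
    Matrix (Equiv.Perm (Fin n)) (Equiv.Perm (Fin n)) ℝ :=
  fun π σ => if (permutationGraph n).Adj π σ then 1 else 0

/-!
`P(n)` is the Cayley graph of `S(n)` for the connection set of derangements, so the adjacency
matrix acts by `(A v)(π) = ∑_{τ derangement} v(π τ)`; the constant vector has eigenvalue `d(n)`.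
For the other eigenvalue take `v(π) = h(π a)` with `∑ h = 0`. No derangement maps `a` to `a`, and
conjugating by the transposition `(b b')` shows that, for `b, b' ≠ a`, as many derangements map
`a` to `b` as to `b'`; summing over the target gives `(n - 1) c = d(n)` for this common count `c`,
so `c = d(n - 1) + d(n - 2)`. Hence `(A v)(π) = c (∑ h - h(π a)) = -c v(π)`.
-/

open Finset Equiv

lemma permCongr_mem_derangements_iff {α β : Type*} (e : α ≃ β) (τ : Perm α) :
    e.permCongr τ ∈ derangements β ↔ τ ∈ derangements α := by
  simp only [derangements, Set.mem_ofPred_eq, permCongr_apply]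
  rw [e.symm.forall_congr_left]
  simp

section Derangements

variable {α : Type*} [Fintype α] [DecidableEq α]

lemma card_derangements_apply_self (a : α) :
    #{τ ∈ (derangements α).toFinset | τ a = a} = 0 := by
  simp only [card_eq_zero, filter_eq_empty_iff, Set.mem_toFinset]
  exact fun τ hτ => hτ a

lemma card_derangements_apply_eq_congr {a b b' : α} (hb : a ≠ b) (hb' : a ≠ b') :
    #{τ ∈ (derangements α).toFinset | τ a = b} =
      #{τ ∈ (derangements α).toFinset | τ a = b'} := by
  refine card_equiv (swap b b').permCongr fun τ => ?_
  have hfix : swap b b' a = a := swap_apply_of_ne_of_ne hb hb'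
  simp only [mem_filter, Set.mem_toFinset, permCongr_apply, symm_swap, hfix,
    permCongr_mem_derangements_iff, swap_apply_eq_iff, swap_apply_right]

lemma sum_card_derangements_apply_eq (a : α) :
    ∑ b, #{τ ∈ (derangements α).toFinset | τ a = b} = numDerangements (Fintype.card α) := by
  rw [← card_eq_sum_card_fiberwise fun _ _ => mem_univ _, Set.toFinset_card,
    card_derangements_eq_numDerangements]

lemma card_derangements_apply_eq_of_ne {a b : α} (hab : a ≠ b) :
    #{τ ∈ (derangements α).toFinset | τ a = b} =
      numDerangements (Fintype.card α - 1) + numDerangements (Fintype.card α - 2) := by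
  obtain ⟨m, hm⟩ : ∃ m, Fintype.card α = m + 2 :=
    ⟨Fintype.card α - 2, by have := Fintype.one_lt_card_iff.2 ⟨a, b, hab⟩; omega⟩
  have hsum := sum_card_derangements_apply_eq a
  rw [← sum_erase_add _ _ (mem_univ a), card_derangements_apply_self, add_zero,
    sum_congr rfl fun b' hb' => card_derangements_apply_eq_congr (ne_of_mem_erase hb').symm hab,
    sum_const, card_erase_of_mem (mem_univ a), card_univ, smul_eq_mul, hm,
    numDerangements_add_two] at hsum
  rw [hm]
  exact Nat.eq_of_mul_eq_mul_left m.succ_pos (by simpa [add_comm] using hsum)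

lemma sum_derangements_apply {M : Type*} [AddCommGroup M] (g : α → M) (a : α) :
    ∑ τ ∈ (derangements α).toFinset, g (τ a) =
      (numDerangements (Fintype.card α - 1) + numDerangements (Fintype.card α - 2)) •
        (∑ x, g x - g a) := by
  rw [← sum_fiberwise' _ (fun τ : Perm α => τ a) g, ← sum_erase_eq_sub (mem_univ a), smul_sum,
    ← sum_erase_add _ _ (mem_univ a)]
  simp only [sum_const, card_derangements_apply_self, zero_smul, add_zero]
  exact sum_congr rfl fun x hx => by
    rw [card_derangements_apply_eq_of_ne (ne_of_mem_erase hx).symm]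

end Derangements

section PermutationGraph

variable {n : ℕ} [NeZero n]

lemma permutationGraph_adj_mul_iff (π τ : Perm (Fin n)) :
    (permutationGraph n).Adj π (π * τ) ↔ τ ∈ derangements (Fin n) := by
  simp only [permutationGraph, derangements, Set.mem_ofPred_eq, Perm.mul_apply, ne_eq,
    EmbeddingLike.apply_eq_iff_eq]
  refine ⟨fun h x hx => h.2 x hx.symm, fun h => ⟨fun he => h 0 ?_, fun i hi => h i hi.symm⟩⟩
  rw [left_eq_mul.1 he, Perm.one_apply]

lemma permutationGraphAdjMatrix_mulVec_apply (v : Perm (Fin n) → ℝ) (π : Perm (Fin n)) :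
    (permutationGraphAdjMatrix n).mulVec v π =
      ∑ τ ∈ (derangements (Fin n)).toFinset, v (π * τ) := by
  rw [Matrix.mulVec, dotProduct, ← Equiv.sum_comp (Equiv.mulLeft π)]
  simp only [permutationGraphAdjMatrix, coe_mulLeft, permutationGraph_adj_mul_iff, ite_mul,
    one_mul, zero_mul]
  rw [← sum_filter, Set.filter_mem_univ_eq_toFinset]

lemma permutationGraphAdjMatrix_mulVec_const :
    (permutationGraphAdjMatrix n).mulVec (fun _ => 1) = (numDerangements n : ℝ) • fun _ => 1 := by
  ext π
  rw [permutationGraphAdjMatrix_mulVec_apply, sum_const, Set.toFinset_card,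
    card_derangements_eq_numDerangements, Fintype.card_fin]
  simp only [nsmul_eq_mul, mul_one, Pi.smul_apply, smul_eq_mul]

end PermutationGraph

lemma permutationGraphAdjMatrix_mulVec_comp_eval {n : ℕ} (h : Fin n → ℝ) (hh : ∑ x, h x = 0)
    (a : Fin n) :
    (permutationGraphAdjMatrix n).mulVec (fun π => h (π a)) =
      (-((numDerangements (n - 1) : ℝ) + numDerangements (n - 2))) • fun π => h (π a) := by
  have : NeZero n := NeZero.of_pos a.pos
  ext π
  simp only [permutationGraphAdjMatrix_mulVec_apply, Perm.mul_apply]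
  rw [sum_derangements_apply (fun x => h (π x)) a, Equiv.sum_comp π h, hh, Fintype.card_fin]
  push_cast [zero_sub, smul_neg, nsmul_eq_mul, Pi.smul_apply, smul_eq_mul]
  ring

/-- For `n ≥ 2`, both `d(n)` and `-d(n)/(n-1) = -(d(n-1) + d(n-2))` are eigenvalues
of the adjacency matrix of the permutation graph `P(n)`, where `d` counts
derangements. -/
theorem permutationGraph_eigenvalues (n : ℕ) (hn : 2 ≤ n) :
    (∃ v : Equiv.Perm (Fin n) → ℝ, v ≠ 0 ∧
      (permutationGraphAdjMatrix n).mulVec v = (numDerangements n : ℝ) • v) ∧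
    (∃ v : Equiv.Perm (Fin n) → ℝ, v ≠ 0 ∧
      (permutationGraphAdjMatrix n).mulVec v
        = (-((numDerangements (n - 1) : ℝ) + (numDerangements (n - 2) : ℝ))) • v) := by
  obtain ⟨m, rfl⟩ : ∃ m, n = m + 2 := ⟨n - 2, by omega⟩
  set h : Fin (m + 2) → ℝ := Pi.single 0 1 - Pi.single 1 1
  refine ⟨⟨fun _ => 1, one_ne_zero, permutationGraphAdjMatrix_mulVec_const⟩,
    ⟨fun π => h (π 0), fun hv => ?_, permutationGraphAdjMatrix_mulVec_comp_eval h ?_ 0⟩⟩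
  · simpa [h] using congrFun hv 1
  · simp [h]
end

section
/- Let n ≥ 2. The (n−1)² vectors v_{i,j} − (1/n)·1 ∈ ℝ^{S(n)}, for i, j ∈ {1,…,n−1}, are linearly independent over ℝ (here 1 denotes the all-ones vector indexed by S(n)). -/
/-!
If `π₀ = swap k l` and `s = swap k a` with `k, l ≠ a`, the permutations `π₀` and `π₀ * s` differ
only at `k` and `a`: the first sends `k ↦ l, a ↦ a`, the second `k ↦ a, a ↦ l`. Hence
`f ↦ f π₀ - f (π₀ * s)` is a linear form that kills constants and, on the indicator of
`{π | π i = j}` with `i, j ≠ a`, takes the value `1` if `(i, j) = (k, l)` and `0` otherwise.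
These forms are dual to the shifted indicators, which are therefore linearly independent.
-/

open Equiv

section

variable {R α : Type*} [Ring R] [DecidableEq α]

theorem ite_swap_apply_eq_sub_ite_swap_mul_swap_apply_eq {a i j k l : α}
    (hi : i ≠ a) (hj : j ≠ a) (hk : k ≠ a) (hl : l ≠ a) :
    ((if swap k l i = j then 1 else 0) - if (swap k l * swap k a) i = j then 1 else 0 : R) =
      if i = k ∧ j = l then 1 else 0 := by
  by_cases hik : i = k
  · subst hik
    have hla : swap i l a = a := swap_apply_of_ne_of_ne hk.symm hl.symm
    simp [swap_apply_left, hla, hj.symm, eq_comm]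
  · simp [swap_apply_of_ne_of_ne hik hi, hik]

theorem linearIndependent_ite_perm_apply_eq_sub_const {ι : Type*} {e : ι → α}
    (he : Function.Injective e) {a : α} (ha : ∀ i, e i ≠ a) (c : R) :
    LinearIndependent R
      (fun p : ι × ι => fun π : Perm α => (if π (e p.1) = e p.2 then 1 else 0) - c) := by
  classical
  let dual (q : ι × ι) : Module.Dual R (Perm α → R) :=
    LinearMap.proj (R := R) (φ := fun _ => R) (swap (e q.1) (e q.2)) -
      LinearMap.proj (swap (e q.1) (e q.2) * swap (e q.1) a)
  have dual_apply (q p : ι × ι) :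
      dual q (fun π => (if π (e p.1) = e p.2 then 1 else 0) - c) = if p = q then 1 else 0 := by
    simp only [dual, LinearMap.sub_apply, LinearMap.proj_apply, sub_sub_sub_cancel_right,
      ite_swap_apply_eq_sub_ite_swap_mul_swap_apply_eq (ha _) (ha _) (ha _) (ha _),
      he.eq_iff, Prod.ext_iff]
  exact .of_pairwise_dual_eq_zero_one _ dual
    (fun q p hqp => (dual_apply q p).trans (if_neg hqp.symm))
    (fun q => (dual_apply q q).trans (if_pos rfl))

end

/-- For `n ≥ 2`, the `(n-1)²` vectors `v_{i,j} - (1/n)·𝟙 ∈ ℝ^{S(n)}` for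
`i, j ∈ {1,…,n-1}` are linearly independent, where `v_{i,j}` is the characteristic
vector of `S_{i,j} = {π : π i = j}` and `𝟙` is the all-ones vector. -/
theorem shifted_characteristic_vectors_linearIndependent (n : ℕ) (hn : 2 ≤ n) :
    LinearIndependent ℝ
      (fun p : Fin (n - 1) × Fin (n - 1) =>
        (fun π : Equiv.Perm (Fin n) =>
          (if π (Fin.castLE (n.sub_le 1) p.1) = Fin.castLE (n.sub_le 1) p.2
            then (1 : ℝ) else 0) - 1 / n)) :=
  linearIndependent_ite_perm_apply_eq_sub_const (Fin.castLE_injective _)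
    (a := (⟨n - 1, by omega⟩ : Fin n)) (fun i => Fin.ne_of_lt i.isLt) _
end

section
/- Let n ≥ 3, let y assign a real number y(i,j) to each ordered pair (i,j) with i, j ∈ {1,…,n−1}, and let c ∈ ℝ. Suppose that for every derangement π of {1,…,n} one has c + Σ y(i,j) = 0, the sum being over all pairs (i,j) with i, j ∈ {1,…,n−1} and π(i) = j. Then there exists t ∈ ℝ such that y(i,j) = t for every pair with i ≠ j, and c = −(n−2)·t. -/
/-!
Write `w π` for the sum in the hypothesis; it equals `-c` on every derangement. If a derangement
`π` sends `u ↦ b` and the extra point `n ↦ b'`, then `π * swap u n` is again a derangement, and the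
two weights differ by `y u b - y u b'`. For `n ≥ 4` such a `π` exists for all distinct `u, b, b'`
(take a conjugate of a full rotation), so each row of `y` is constant off the diagonal; so is each
column, because `w π⁻¹` is the weight of `π` for the transpose of `y`. With at least three
indices this makes `y` constant off the diagonal, say `t` (for `n = 3` the two 3-cycles give this
directly).
Finally, a derangement `π` has `n - 2` arrows `i ↦ π i` inside `{1, …, n - 1}` (only the arrows
into and out of `n` are missing), so `w π = (n - 2) t`.
-/

open Equiv Function

theorem exists_mem_derangements_apply_eq_and_apply_eq {α : Type*} [Fintype α]
    (hα : 4 ≤ Fintype.card α) {a b c d : α} (hab : a ≠ b) (hac : a ≠ c) (had : a ≠ d)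
    (hbc : b ≠ c) (hbd : b ≠ d) (hcd : c ≠ d) :
    ∃ π ∈ derangements α, π a = b ∧ π c = d := by
  obtain ⟨k, hk⟩ : ∃ k, Fintype.card α = k + 4 := ⟨_, (Nat.sub_add_cancel hα).symm⟩
  let e : α ≃ Fin (k + 4) := (Fintype.equivFin α).trans (finCongr hk)
  let ρ : Perm α := e.symm.permCongr (finRotate (k + 4))
  have hρ_ne : ∀ x, ρ x ≠ x := fun x => by simp [ρ, e.symm_apply_eq]
  obtain ⟨g, hg⟩ := Perm.exists_extending_pair
    (fun i : Fin 4 => e.symm (Fin.castLE (Nat.le_add_left 4 k) i)) ![a, b, c, d]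
    (e.symm.injective.comp (Fin.castLE_injective _))
    (by intro i j; fin_cases i <;> fin_cases j <;> simp [*, Ne.symm, eq_comm])
  have hπ : ∀ i j : Fin 4, (i : ℕ) + 1 = j →
      (g * ρ * g⁻¹) (![a, b, c, d] i) = ![a, b, c, d] j := by
    intro i j hij
    rw [← hg i, ← hg j]
    simp only [Perm.mul_apply, Perm.inv_def, symm_apply_apply, ρ, permCongr_apply, symm_symm,
      finRotate_apply]
    congr 2
    ext
    rw [Fin.val_add_one_of_lt] <;> simp [Fin.lt_last_iff_ne_last, Fin.ext_iff] <;> omega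
  exact ⟨g * ρ * g⁻¹, fun x hx => hρ_ne (g⁻¹ x) (g.injective (by simpa using hx)),
    hπ 0 1 rfl, hπ 2 3 rfl⟩

theorem exists_forall_ne_eq_of_rows_of_cols {β γ : Type*} [Fintype β] {y : β → β → γ}
    (hβ : 3 ≤ Fintype.card β)
    (hrow : ∀ u b b', u ≠ b → u ≠ b' → y u b = y u b')
    (hcol : ∀ u b b', u ≠ b → u ≠ b' → y b u = y b' u) :
    ∃ t, ∀ i j, i ≠ j → y i j = t := by
  obtain ⟨i₀, j₀, h₀⟩ := Fintype.exists_pair_of_one_lt_card (by omega : 1 < Fintype.card β)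
  refine ⟨y i₀ j₀, fun i j hij => ?_⟩
  obtain ⟨k, hki, hki₀⟩ := ENat.exists_ne_ne_of_three_le (by simpa using hβ) i i₀
  calc y i j = y i k := hrow i j k hij hki.symm
    _ = y i₀ k := hcol k i i₀ hki hki₀
    _ = y i₀ j₀ := hrow i₀ k j₀ hki₀.symm h₀

section PermWeight

variable {α β M : Type*} [Fintype β] [DecidableEq α] [AddCommGroup M]

def permWeight (ι : β → α) (y : β → β → M) (π : Perm α) : M :=
  ∑ i, ∑ j, if π (ι i) = ι j then y i j else 0

variable {ι : β → α} {y : β → β → M}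

theorem permWeight_inv (π : Perm α) : permWeight ι y π⁻¹ = permWeight ι (flip y) π := by
  rw [permWeight, Finset.sum_comm]
  refine Finset.sum_congr rfl fun j _ => Finset.sum_congr rfl fun i _ => ?_
  simp_rw [Perm.inv_eq_iff_eq, eq_comm (a := ι i)]
  rfl

theorem sum_ite_apply_eq_of_injective (hι : Injective ι) (f : β → M) (b : β) :
    ∑ j, (if ι b = ι j then f j else 0) = f b := by
  classical
  simp_rw [hι.eq_iff]
  simp

theorem sum_ite_eq_zero_of_notMem_range (f : β → M) {x : α} (hx : x ∉ Set.range ι) :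
    ∑ j, (if x = ι j then f j else 0) = 0 :=
  Finset.sum_eq_zero fun j _ => if_neg fun h => hx ⟨j, h.symm⟩

theorem permWeight_sub_permWeight_of_eqOn (u : β) {π σ : Perm α}
    (h : ∀ i, i ≠ u → π (ι i) = σ (ι i)) :
    permWeight ι y π - permWeight ι y σ =
      (∑ j, if π (ι u) = ι j then y u j else 0) - ∑ j, if σ (ι u) = ι j then y u j else 0 := by
  rw [permWeight, permWeight, ← Finset.sum_sub_distrib,
    Finset.sum_eq_single_of_mem u (Finset.mem_univ u) fun i _ hi => by rw [h i hi, sub_self]]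

theorem apply_eq_apply_of_permWeight_eq [Fintype α] (hα : 4 ≤ Fintype.card α)
    (hι : Injective ι) {m : α} (hm : m ∉ Set.range ι) {w : M}
    (hw : ∀ π ∈ derangements α, permWeight ι y π = w) {u b b' : β} (hub : u ≠ b)
    (hub' : u ≠ b') : y u b = y u b' := by
  rcases eq_or_ne b b' with rfl | hbb'
  · rfl
  have hm_ne : ∀ i, ι i ≠ m := fun i h => hm ⟨i, h⟩
  obtain ⟨π, hπ, hπu, hπm⟩ := exists_mem_derangements_apply_eq_and_apply_eq hα
    (hι.ne hub) (hm_ne u) (hι.ne hub') (hm_ne b) (hι.ne hbb') (hm_ne b').symm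
  let σ := π * swap (ι u) m
  have hσ : σ ∈ derangements α := by
    intro x
    by_cases hxu : x = ι u
    · simpa [σ, hxu, hπm] using hι.ne hub'.symm
    by_cases hxm : x = m
    · simpa [σ, hxm, hπu] using hm_ne b
    · simpa [σ, swap_apply_of_ne_of_ne hxu hxm] using hπ x
  have hdiff := permWeight_sub_permWeight_of_eqOn (y := y) (σ := σ) u fun i hi =>
    (congrArg π (swap_apply_of_ne_of_ne (hι.ne hi) (hm_ne i))).symm
  rw [hw π hπ, hw σ hσ, sub_self] at hdiff
  simpa [σ, hπu, hπm, sum_ite_apply_eq_of_injective hι, sub_eq_zero] using hdiff.symm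

theorem permWeight_eq_card_sub_one_smul [Fintype α] (hι : Injective ι) {m : α}
    (hm : Set.range ι = {m}ᶜ) {t : M} (ht : ∀ i j, i ≠ j → y i j = t) {π : Perm α}
    (hπ : π ∈ derangements α) : permWeight ι y π = (Fintype.card β - 1) • t := by
  classical
  have hmem : ∀ x, x ∈ Set.range ι ↔ x ≠ m := by simp [hm]
  obtain ⟨i₀, hi₀⟩ := (hmem (π⁻¹ m)).2 fun h => hπ m (Perm.inv_eq_iff_eq.mp h).symm
  have hrow : ∀ i, (∑ j, if π (ι i) = ι j then y i j else 0) = if i = i₀ then 0 else t := by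
    intro i
    rcases eq_or_ne i i₀ with rfl | hi
    · rw [if_pos rfl, Perm.eq_inv_iff_eq.mp hi₀]
      exact sum_ite_eq_zero_of_notMem_range _ fun h => (hmem m).1 h rfl
    · obtain ⟨j, hj⟩ := (hmem (π (ι i))).2 fun h =>
        hi (hι ((Perm.eq_inv_iff_eq.mpr h).trans hi₀.symm))
      rw [if_neg hi, ← hj, sum_ite_apply_eq_of_injective hι]
      exact ht i j fun h => hπ (ι i) (by rw [← hj, h])
  rw [permWeight, Finset.sum_congr rfl fun i _ => hrow i]
  simp [Finset.sum_ite, Finset.filter_ne']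

theorem permWeight_flip_of_forall_derangements {w : M}
    (hw : ∀ π ∈ derangements α, permWeight ι y π = w) :
    ∀ π ∈ derangements α, permWeight ι (flip y) π = w := fun π hπ => by
  rw [← permWeight_inv]
  exact hw _ fun x h => hπ x (Perm.inv_eq_iff_eq.mp h).symm

theorem exists_forall_ne_eq_of_permWeight_eq [Fintype α] (hα : 4 ≤ Fintype.card α)
    (hβ : 3 ≤ Fintype.card β) (hι : Injective ι) {m : α} (hm : m ∉ Set.range ι) {w : M}
    (hw : ∀ π ∈ derangements α, permWeight ι y π = w) : ∃ t, ∀ i j, i ≠ j → y i j = t :=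
  exists_forall_ne_eq_of_rows_of_cols hβ
    (fun _ _ _ => apply_eq_apply_of_permWeight_eq hα hι hm hw)
    (fun _ _ _ => apply_eq_apply_of_permWeight_eq hα hι hm
      (permWeight_flip_of_forall_derangements hw))

end PermWeight

/-- Let `n ≥ 3`, let `y` assign a real number to each pair `(i,j)` with
`i, j ∈ {1,…,n-1}`, and let `c ∈ ℝ`. If for every derangement `π` of `{1,…,n}` one
has `c + Σ_{π i = j} y (i,j) = 0`, then there is `t ∈ ℝ` with `y (i,j) = t` for every
pair with `i ≠ j`, and `c = -(n-2)·t`. -/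
theorem kernel_of_derangement_rows_with_ones (n : ℕ) (hn : 3 ≤ n)
    (y : Fin (n - 1) → Fin (n - 1) → ℝ) (c : ℝ)
    (hker : ∀ π : Equiv.Perm (Fin n), (∀ i, π i ≠ i) →
      c + (∑ i : Fin (n - 1), ∑ j : Fin (n - 1),
        if π (Fin.castLE (n.sub_le 1) i) = Fin.castLE (n.sub_le 1) j
          then y i j else 0) = 0) :
    ∃ t : ℝ, (∀ i j : Fin (n - 1), i ≠ j → y i j = t) ∧ c = -((n : ℝ) - 2) * t := by
  have hw : ∀ π ∈ derangements (Fin n), permWeight (Fin.castLE (n.sub_le 1)) y π = -c :=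
    fun π hπ => eq_neg_of_add_eq_zero_right (hker π hπ)
  have hm : Set.range (Fin.castLE (n.sub_le 1)) = {⟨n - 1, by omega⟩}ᶜ := by
    ext x
    simp only [Fin.range_castLE, Set.mem_ofPred_eq, Set.mem_compl_iff, Set.mem_singleton_iff,
      Fin.ext_iff]
    omega
  have hrot : finRotate n ∈ derangements (Fin n) := fun x =>
    Perm.mem_support.mp (by simp [support_finRotate_of_le (by omega : 2 ≤ n)])
  obtain ⟨t, ht⟩ : ∃ t, ∀ i j, i ≠ j → y i j = t := by
    rcases hn.eq_or_lt with rfl | hn4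
    · have h01 : y 0 1 = -c := by simpa [permWeight, Fin.sum_univ_two] using hw _ hrot
      have h10 : y 1 0 = -c := by
        simpa [permWeight, Fin.sum_univ_two, flip] using
          permWeight_flip_of_forall_derangements hw _ hrot
      refine ⟨-c, fun i j hij => ?_⟩
      fin_cases i <;> fin_cases j <;> simp_all
    · exact exists_forall_ne_eq_of_permWeight_eq (by simpa)
        (by simp only [Fintype.card_fin]; omega) (Fin.castLE_injective _)
        (m := ⟨n - 1, by omega⟩) (by simp [hm]) hw
  refine ⟨t, ht, ?_⟩
  have hc := permWeight_eq_card_sub_one_smul (Fin.castLE_injective _) hm ht hrot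
  rw [hw _ hrot, Fintype.card_fin, nsmul_eq_mul, Nat.cast_sub (by omega),
    Nat.cast_sub (by omega)] at hc
  push_cast at hc
  linarith
end

section
/- Let n ≥ 4 and let x assign a real number x(i) to each i ∈ {1,…,n−1}. Suppose that for every permutation π of {1,…,n} the sum Σ x(i), taken over all i ∈ {1,…,n−1} with π(i) = i, lies in {0,1}. Then every x(i) lies in {0,1} and at most one i ∈ {1,…,n−1} has x(i) = 1 (i.e. x is either identically zero or a standard basis vector). -/
/-!
For every `S ⊆ {1,…,n-1}` there is a permutation of `{1,…,n}` whose fixed points in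
`{1,…,n-1}` are exactly `S`: a cycle through the complement of `S` together with `n`, which
has length at least two unless `S` is everything. So every subset sum of `x` lies in `{0,1}`;
singletons give `x i ∈ {0,1}`, and pairs forbid two entries equal to `1`.
-/

open Equiv Finset

theorem Finset.exists_perm_apply_eq_self_iff_notMem {α : Type*} [DecidableEq α] [Fintype α]
    (s : Finset α) (hs : s.Nontrivial) : ∃ f : Perm α, ∀ a, f a = a ↔ a ∉ s := by
  obtain ⟨f, hcycle, hsupport⟩ := s.exists_cycleOn
  exact ⟨f, fun a => ⟨fun hfa ha => hcycle.apply_ne hs ha hfa,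
    fun ha => Perm.notMem_support.1 fun h => ha (hsupport h)⟩⟩

theorem Function.Embedding.exists_perm_apply_eq_self_iff_mem {ι β : Type*} [Fintype ι]
    [DecidableEq β] [Fintype β] (e : ι ↪ β) {b : β} (hb : b ∉ Set.range e) (S : Finset ι) :
    ∃ π : Perm β, ∀ i, π (e i) = e i ↔ i ∈ S := by
  classical
  rcases Sᶜ.eq_empty_or_nonempty with hS | ⟨j, hj⟩
  · exact ⟨1, fun i => by simp [(compl_eq_empty_iff S).1 hS]⟩
  · have hnontrivial : (insert b (Sᶜ.map e)).Nontrivial :=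
      ⟨b, mem_insert_self _ _, e j, mem_insert_of_mem (mem_map_of_mem e hj),
        fun h => hb ⟨j, h.symm⟩⟩
    obtain ⟨π, hπ⟩ := exists_perm_apply_eq_self_iff_notMem _ hnontrivial
    refine ⟨π, fun i => ?_⟩
    have hbi : e i ≠ b := fun h => hb ⟨i, h⟩
    simp [hπ, hbi]

theorem eq_zero_or_one_of_forall_sum_mem {ι R : Type*} [AddCommMonoidWithOne R] [CharZero R]
    {x : ι → R} (hx : ∀ S : Finset ι, ∑ i ∈ S, x i ∈ ({0, 1} : Set R)) :
    (∀ i, x i = 0 ∨ x i = 1) ∧ ∀ i j, x i = 1 → x j = 1 → i = j := by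
  classical
  refine ⟨fun i => by simpa using hx {i}, fun i j hi hj => ?_⟩
  by_contra hij
  have hpair := hx {i, j}
  rw [sum_pair hij, hi, hj, one_add_one_eq_two] at hpair
  norm_num at hpair

theorem zero_one_sums_over_fixed_points_general (n : ℕ)
    (x : Fin (n - 1) → ℝ)
    (hx : ∀ π : Equiv.Perm (Fin n),
      (∑ i : Fin (n - 1),
        if π (Fin.castLE (n.sub_le 1) i) = Fin.castLE (n.sub_le 1) i
          then x i else 0) ∈ ({0, 1} : Set ℝ)) :
    (∀ i, x i = 0 ∨ x i = 1) ∧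
    (∀ i j : Fin (n - 1), x i = 1 → x j = 1 → i = j) := by
  obtain _ | n := n
  · exact ⟨fun i => i.elim0, fun i => i.elim0⟩
  refine eq_zero_or_one_of_forall_sum_mem fun S => ?_
  have hlast : Fin.last n ∉ Set.range (Fin.castLEEmb ((n + 1).sub_le 1)) :=
    fun ⟨i, hi⟩ => i.isLt.ne (Fin.ext_iff.1 hi)
  obtain ⟨π, hπ⟩ := (Fin.castLEEmb _).exists_perm_apply_eq_self_iff_mem hlast S
  simp only [Fin.castLEEmb_apply] at hπ
  simpa [hπ] using hx π

/-- Let `n ≥ 4` and let `x` assign a real number to each `i ∈ {1,…,n-1}`. If for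
every permutation `π` of `{1,…,n}` the sum `Σ_{i ≤ n-1, π i = i} x i` lies in
`{0,1}`, then every `x i` lies in `{0,1}` and at most one `i` has `x i = 1`. -/
theorem zero_one_sums_over_fixed_points (n : ℕ) (hn : 4 ≤ n)
    (x : Fin (n - 1) → ℝ)
    (hx : ∀ π : Equiv.Perm (Fin n),
      (∑ i : Fin (n - 1),
        if π (Fin.castLE (n.sub_le 1) i) = Fin.castLE (n.sub_le 1) i
          then x i else 0) ∈ ({0, 1} : Set ℝ)) :
    (∀ i, x i = 0 ∨ x i = 1) ∧
    (∀ i j : Fin (n - 1), x i = 1 → x j = 1 → i = j) :=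
  zero_one_sums_over_fixed_points_general n x hx
end
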